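/- In the logistic selection model with covariate: P(R=1|X=x, Z=z) = logistic(ψ₀+ψ₁x+ψ₂z), if X | Z=z, R=1 ~ N(μ_z, σ²) for each z, then X | Z=z, R=0 ~ N(μ_z − ψ₁σ², σ²); in particular the shift δ = ψ₁σ² does not depend on z or on ψ₂. -/

import Mathlib

open MeasureTheory Real

noncomputable def normalPDF (μ σ2 x : ℝ) : ℝ :=
  (Real.sqrt (2 * Real.pi * σ2))⁻¹ * Real.exp (-(x - μ)^2 / (2 * σ2))

noncomputable def logisticSel (ψ0 ψ1 x : ℝ) : ℝ :=
  Real.exp (ψ0 + ψ1 * x) / (1 + Real.exp (ψ0 + ψ1 * x))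

/-!
Bayes' rule gives `f(x | z, R = 0) ∝ (1 - p) f = e^{-(ψ₀ + ψ₂z + ψ₁x)} · p f ∝ e^{-ψ₁x} · N(μ_z, σ²)(x)`,
and exponentially tilting a Gaussian density by `e^{-ψ₁x}` shifts its mean by `-ψ₁σ²` and rescales it
by a constant. Normalising, that constant cancels, together with everything depending on `ψ₂z`.
-/

lemma normalPDF_eq_gaussianPDFReal (μ : ℝ) {σ2 : ℝ} (hσ2 : 0 ≤ σ2) :
    normalPDF μ σ2 = ProbabilityTheory.gaussianPDFReal μ σ2.toNNReal := by
  ext x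
  simp only [normalPDF, ProbabilityTheory.gaussianPDFReal, Real.coe_toNNReal _ hσ2]

lemma integral_normalPDF (μ : ℝ) {σ2 : ℝ} (hσ2 : 0 < σ2) : ∫ x, normalPDF μ σ2 x = 1 := by
  rw [normalPDF_eq_gaussianPDFReal μ hσ2.le]
  exact ProbabilityTheory.integral_gaussianPDFReal_eq_one μ (by simpa using hσ2)

/-- For `σ2 ≤ 0` both sides are `0`, because `√(2πσ2) = 0`. -/
lemma exp_neg_mul_normalPDF (a b μ σ2 x : ℝ) :
    exp (-(a + b * x)) * normalPDF μ σ2 x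
      = exp (-(a + b * μ) + b ^ 2 * σ2 / 2) * normalPDF (μ - b * σ2) σ2 x := by
  rcases eq_or_ne σ2 0 with rfl | hσ2
  · simp [normalPDF]
  have hexp : -(a + b * x) + -(x - μ) ^ 2 / (2 * σ2)
      = -(a + b * μ) + b ^ 2 * σ2 / 2 + -(x - (μ - b * σ2)) ^ 2 / (2 * σ2) := by
    field_simp
    ring
  simp only [normalPDF, mul_left_comm (exp _), ← exp_add, hexp]

lemma one_sub_logisticSel (a b x : ℝ) :
    1 - logisticSel a b x = exp (-(a + b * x)) * logisticSel a b x := by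
  have hpos : 0 < exp (a + b * x) := exp_pos _
  rw [logisticSel, exp_neg]
  field_simp
  ring

lemma div_integral_eq_normalPDF {g : ℝ → ℝ} {c μ σ2 : ℝ} (hσ2 : 0 < σ2) (hc : c ≠ 0)
    (hg : ∀ x, g x = c * normalPDF μ σ2 x) (x : ℝ) :
    g x / ∫ y, g y = normalPDF μ σ2 x := by
  simp only [hg, integral_const_mul, integral_normalPDF μ hσ2, mul_one]
  field_simp

theorem covariate_logistic_shift_general
    (fz : ℝ → ℝ → ℝ) (μz : ℝ → ℝ) (σ2 ψ0 ψ1 ψ2 : ℝ) (hσ2 : 0 < σ2)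
    (p : ℝ → ℝ → ℝ)
    (hp : ∀ z x, p z x = logisticSel (ψ0 + ψ2 * z) ψ1 x)
    (P1 P0 : ℝ → ℝ)
    (hP0 : ∀ z, P0 z = ∫ x, (1 - p z x) * fz z x)
    (hP1pos : ∀ z, 0 < P1 z)
    (hcond1 : ∀ z x, p z x * fz z x / P1 z = normalPDF (μz z) σ2 x) :
    ∀ z x, (1 - p z x) * fz z x / P0 z = normalPDF (μz z - ψ1 * σ2) σ2 x := by
  intro z
  have hselected : ∀ x, p z x * fz z x = P1 z * normalPDF (μz z) σ2 x := fun x => by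
    rw [← hcond1 z x, mul_div_cancel₀ _ (hP1pos z).ne']
  have hunselected : ∀ x, (1 - p z x) * fz z x
      = exp (-(ψ0 + ψ2 * z + ψ1 * μz z) + ψ1 ^ 2 * σ2 / 2) * P1 z
        * normalPDF (μz z - ψ1 * σ2) σ2 x := fun x => by
    rw [hp z x, one_sub_logisticSel, mul_assoc, ← hp z x, hselected, mul_left_comm,
      exp_neg_mul_normalPDF]
    ring
  rw [hP0 z]
  exact div_integral_eq_normalPDF hσ2 (mul_pos (exp_pos _) (hP1pos z)).ne' hunselected

/-- logistic selection with a covariate `Z`: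
`P(R=1|X=x,Z=z) = logistic(ψ₀+ψ₁x+ψ₂z)` and `X|Z=z,R=1 ~ N(μ_z,σ²)` imply
`X|Z=z,R=0 ~ N(μ_z − ψ₁σ², σ²)`; the shift does not depend on `z` or `ψ₂`. -/
theorem covariate_logistic_shift
    (fz : ℝ → ℝ → ℝ) (μz : ℝ → ℝ) (σ2 ψ0 ψ1 ψ2 : ℝ) (hσ2 : 0 < σ2)
    (hfz_nonneg : ∀ z x, 0 ≤ fz z x)
    (hfz_meas : ∀ z, Measurable (fz z))
    (hfz_int : ∀ z, Integrable (fz z))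
    (p : ℝ → ℝ → ℝ)
    (hp : ∀ z x, p z x = logisticSel (ψ0 + ψ2 * z) ψ1 x)
    (P1 P0 : ℝ → ℝ)
    (hP1 : ∀ z, P1 z = ∫ x, p z x * fz z x)
    (hP0 : ∀ z, P0 z = ∫ x, (1 - p z x) * fz z x)
    (hP1pos : ∀ z, 0 < P1 z) (hP0pos : ∀ z, 0 < P0 z)
    (hcond1 : ∀ z x, p z x * fz z x / P1 z = normalPDF (μz z) σ2 x) :
    ∀ z x, (1 - p z x) * fz z x / P0 z = normalPDF (μz z - ψ1 * σ2) σ2 x :=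
  covariate_logistic_shift_general fz μz σ2 ψ0 ψ1 ψ2 hσ2 p hp P1 P0 hP0 hP1pos hcond1
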